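/- Let (M,d) be a compact metric space and f : M → M a continuous map. Fix ε > 0, δ ∈ (0,1) and n ∈ ℕ. Then the function ν ↦ N^ν(n,ε,δ), defined on the space of Borel probability measures on M equipped with the weak* topology, is upper semicontinuous. -/
import Mathlib


open MeasureTheory Filter Topology

/-- The Bowen ball `B_n(x, ε) = {y : d(f^i x, f^i y) < ε for all 0 ≤ i ≤ n-1}`. -/
def bowenBall {M : Type*} [PseudoMetricSpace M] (f : M → M) (n : ℕ) (ε : ℝ) (x : M) : Set M :=
  {y | ∀ i < n, dist (f^[i] x) (f^[i] y) < ε}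

/-- `N^ν(n, ε, δ)`: the minimal cardinality of a finite set `S ⊆ M` such that the union of
the Bowen balls `B_n(x, ε)`, `x ∈ S`, has `ν`-measure greater than `1 - δ`. -/
noncomputable def spanNum {M : Type*} [PseudoMetricSpace M] [MeasurableSpace M]
    (f : M → M) (n : ℕ) (ε δ : ℝ) (ν : Measure M) : ℕ :=
  sInf {k : ℕ | ∃ S : Finset M, S.card = k ∧
    ν (⋃ x ∈ S, bowenBall f n ε x) > ENNReal.ofReal (1 - δ)}

lemma isOpen_bowenBall {M : Type*} [PseudoMetricSpace M] {f : M → M} (hf : Continuous f)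
    (n : ℕ) (ε : ℝ) (x : M) : IsOpen (bowenBall f n ε x) := by
  have : bowenBall f n ε x = ⋂ i ∈ Finset.range n, (f^[i]) ⁻¹' Metric.ball (f^[i] x) ε := by
    ext y
    simp [bowenBall, Metric.mem_ball, dist_comm]
  rw [this]
  exact isOpen_biInter_finset fun i _ => Metric.isOpen_ball.preimage (hf.iterate i)

lemma mem_bowenBall_self {M : Type*} [PseudoMetricSpace M] (f : M → M) (n : ℕ) {ε : ℝ}
    (hε : 0 < ε) (x : M) : x ∈ bowenBall f n ε x := fun i _ => by simpa using hε

/-- on a compact metric space with `f : M → M` continuous, for fixed `ε > 0`,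
`δ ∈ (0,1)` and `n ∈ ℕ`, the map `ν ↦ N^ν(n, ε, δ)` is upper semicontinuous on the space of
Borel probability measures with the weak* topology. -/
theorem spanNum_upperSemicontinuous
    {M : Type*} [MetricSpace M] [CompactSpace M] [MeasurableSpace M] [BorelSpace M]
    (f : M → M) (hf : Continuous f) (ε : ℝ) (hε : 0 < ε)
    (δ : ℝ) (hδ : δ ∈ Set.Ioo (0 : ℝ) 1) (n : ℕ) :
    UpperSemicontinuous (fun ν : ProbabilityMeasure M =>
      (spanNum f n ε δ (ν : Measure M) : ℝ)) := by
  intro ν y hy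
  -- The defining set is nonempty thanks to compactness.
  have hcov : (Set.univ : Set M) ⊆ ⋃ x : M, bowenBall f n ε x := fun x _ =>
    Set.mem_iUnion.mpr ⟨x, mem_bowenBall_self f n hε x⟩
  obtain ⟨t, ht⟩ := isCompact_univ.elim_finite_subcover (fun x : M => bowenBall f n ε x)
    (fun x => isOpen_bowenBall hf n ε x) hcov
  have hne : {k : ℕ | ∃ S : Finset M, S.card = k ∧
      (ν : Measure M) (⋃ x ∈ S, bowenBall f n ε x) > ENNReal.ofReal (1 - δ)}.Nonempty := by
    refine ⟨t.card, t, rfl, ?_⟩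
    have h1 : (ν : Measure M) (⋃ x ∈ t, bowenBall f n ε x) = 1 := by
      rw [← measure_univ (μ := (ν : Measure M))]
      exact le_antisymm (measure_mono (Set.subset_univ _)) (measure_mono ht)
    rw [h1]
    exact ENNReal.ofReal_lt_one.mpr (by linarith [hδ.1])
  obtain ⟨S, hScard, hSmeas⟩ := Nat.sInf_mem hne
  have hU : IsOpen (⋃ x ∈ S, bowenBall f n ε x) :=
    isOpen_biUnion fun x _ => isOpen_bowenBall hf n ε x
  have hliminf : (ν : Measure M) (⋃ x ∈ S, bowenBall f n ε x) ≤
      Filter.liminf (fun μ : ProbabilityMeasure M =>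
        (μ : Measure M) (⋃ x ∈ S, bowenBall f n ε x)) (𝓝 ν) :=
    ProbabilityMeasure.le_liminf_measure_open_of_tendsto tendsto_id hU
  have hev : ∀ᶠ μ : ProbabilityMeasure M in 𝓝 ν,
      ENNReal.ofReal (1 - δ) < (μ : Measure M) (⋃ x ∈ S, bowenBall f n ε x) :=
    Filter.eventually_lt_of_lt_liminf (lt_of_lt_of_le hSmeas hliminf)
  filter_upwards [hev] with μ hμ
  have hle : spanNum f n ε δ (μ : Measure M) ≤ spanNum f n ε δ (ν : Measure M) := by
    rw [show spanNum f n ε δ (ν : Measure M) = S.card from hScard.symm]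
    exact Nat.sInf_le ⟨S, rfl, hμ⟩
  calc (spanNum f n ε δ (μ : Measure M) : ℝ) ≤ spanNum f n ε δ (ν : Measure M) := by
        exact_mod_cast hle
    _ < y := hy
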